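/- arXiv:1310.8633 — 2 statements merged into one kernel-verified Lean document; each statement's English description precedes it below -/
import Mathlib

section
/- Let n, m be positive integers with m < n, and let λ > 0. Let F₁ be a real n×m matrix, F₂ a real n×(n−m) matrix satisfying F₂ᵀ F₂ = I_{n−m} and F₁ F₁ᵀ + F₂ F₂ᵀ = I_n. Let U be an invertible m×m real matrix and set S = F₁ U. Let Σ be a real n×n matrix, V = Σ + nλ I_n, and assume B := F₂ᵀ V F₂ is invertible. For y ∈ ℝⁿ define ĉ = F₂ B⁻¹ F₂ᵀ y and b̂ = U⁻¹ F₁ᵀ (y − Σ ĉ). Then S b̂ + Σ ĉ = (I_n − nλ F₂ B⁻¹ F₂ᵀ) y; that is, the fitted vector equals A(λ) y with influence matrix A(λ) = I_n − nλ F₂ (F₂ᵀ V F₂)⁻¹ F₂ᵀ. -/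
open Matrix

/-- The fitted vector of the smoothing spline equals `A(λ) y` with influence
matrix `A(λ) = I - nλ F₂ (F₂ᵀ V F₂)⁻¹ F₂ᵀ`, where `S = F₁ U` is the QR
decomposition of the null-space basis matrix, `[F₁ F₂]` is orthogonal,
`V = Σ + nλ I`, `ĉ = F₂ (F₂ᵀ V F₂)⁻¹ F₂ᵀ y` and `b̂ = U⁻¹ F₁ᵀ (y - Σ ĉ)`. -/
theorem stmt1 (n m : ℕ) (hm : 0 < m) (hmn : m < n) (lam : ℝ) (hlam : 0 < lam)
    (F₁ : Matrix (Fin n) (Fin m) ℝ) (F₂ : Matrix (Fin n) (Fin (n - m)) ℝ)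
    (hF₂ : F₂ᵀ * F₂ = 1) (horth : F₁ * F₁ᵀ + F₂ * F₂ᵀ = 1)
    (U : Matrix (Fin m) (Fin m) ℝ) (hU : IsUnit U.det)
    (S : Matrix (Fin n) (Fin m) ℝ) (hS : S = F₁ * U)
    (Sig : Matrix (Fin n) (Fin n) ℝ)
    (V : Matrix (Fin n) (Fin n) ℝ) (hV : V = Sig + ((n : ℝ) * lam) • (1 : Matrix (Fin n) (Fin n) ℝ))
    (B : Matrix (Fin (n - m)) (Fin (n - m)) ℝ) (hB : B = F₂ᵀ * V * F₂)
    (hBinv : IsUnit B.det)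
    (y : Fin n → ℝ)
    (chat : Fin n → ℝ) (hc : chat = (F₂ * B⁻¹ * F₂ᵀ).mulVec y)
    (bhat : Fin m → ℝ) (hb : bhat = U⁻¹.mulVec (F₁ᵀ.mulVec (y - Sig.mulVec chat))) :
    S.mulVec bhat + Sig.mulVec chat =
      ((1 : Matrix (Fin n) (Fin n) ℝ) -
        ((n : ℝ) * lam) • (F₂ * B⁻¹ * F₂ᵀ)).mulVec y := by
  set M : Matrix (Fin n) (Fin n) ℝ := F₂ * B⁻¹ * F₂ᵀ with hM
  have hUU : U * U⁻¹ = 1 := Matrix.mul_nonsing_inv U hU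
  have hBB : B * B⁻¹ = 1 := Matrix.mul_nonsing_inv B hBinv
  have h1 : y - Sig.mulVec chat = ((1 : Matrix (Fin n) (Fin n) ℝ) - Sig * M).mulVec y := by
    rw [hc, Matrix.sub_mulVec, Matrix.one_mulVec, Matrix.mulVec_mulVec]
  have hLHS : S.mulVec bhat + Sig.mulVec chat
      = (S * (U⁻¹ * (F₁ᵀ * ((1 : Matrix (Fin n) (Fin n) ℝ) - Sig * M))) + Sig * M).mulVec y := by
    rw [hb, h1, hc, Matrix.add_mulVec]
    simp only [Matrix.mulVec_mulVec]
  rw [hLHS]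
  congr 1
  -- reduce to a matrix identity
  have hSU : S * (U⁻¹ * (F₁ᵀ * ((1 : Matrix (Fin n) (Fin n) ℝ) - Sig * M)))
      = F₁ * F₁ᵀ * ((1 : Matrix (Fin n) (Fin n) ℝ) - Sig * M) := by
    rw [hS]
    rw [show F₁ * U * (U⁻¹ * (F₁ᵀ * ((1 : Matrix (Fin n) (Fin n) ℝ) - Sig * M)))
        = F₁ * (U * U⁻¹) * F₁ᵀ * ((1 : Matrix (Fin n) (Fin n) ℝ) - Sig * M) by
      simp only [Matrix.mul_assoc]]
    rw [hUU, Matrix.mul_one]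
  rw [hSU]
  have hF1 : F₁ * F₁ᵀ = 1 - F₂ * F₂ᵀ := by
    rw [← horth]; abel
  have hkey : F₂ᵀ * Sig * F₂ = B - ((n : ℝ) * lam) • (1 : Matrix (Fin (n-m)) (Fin (n-m)) ℝ) := by
    rw [hB, hV]
    rw [Matrix.mul_add, Matrix.add_mul, Matrix.mul_smul, Matrix.mul_one, Matrix.smul_mul, hF₂]
    abel
  -- F₂ᵀ * (Sig * M) = F₂ᵀ - nλ • (B⁻¹ * F₂ᵀ)
  have hkey2 : F₂ᵀ * (Sig * M) = F₂ᵀ - ((n : ℝ) * lam) • (B⁻¹ * F₂ᵀ) := by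
    have : F₂ᵀ * (Sig * M) = (F₂ᵀ * Sig * F₂) * (B⁻¹ * F₂ᵀ) := by
      rw [hM]; simp only [Matrix.mul_assoc]
    rw [this, hkey, Matrix.sub_mul, Matrix.smul_mul, Matrix.one_mul]
    congr 1
    rw [show B * (B⁻¹ * F₂ᵀ) = (B * B⁻¹) * F₂ᵀ by rw [Matrix.mul_assoc], hBB, Matrix.one_mul]
  have hkey3 : F₂ * F₂ᵀ * (Sig * M) = F₂ * F₂ᵀ - ((n : ℝ) * lam) • M := by
    rw [Matrix.mul_assoc, hkey2, Matrix.mul_sub, Matrix.mul_smul, hM, Matrix.mul_assoc]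
  rw [hF1, Matrix.sub_mul, Matrix.one_mul, Matrix.mul_sub, Matrix.mul_one, hkey3]
  rw [sub_sub_cancel]
  abel
end

section
/- Let m ≥ 1 be an integer and let f : ℝ → ℝ be m times continuously differentiable on [0,1]. Suppose that ∫₀¹ f^{(ν)}(t) dt = 0 for every ν = 0, 1, …, m−1, where f^{(ν)} denotes the ν-th derivative. Then sup_{x ∈ [0,1]} |f(x)| ≤ (∫₀¹ (f^{(m)}(t))² dt)^{1/2}. -/
open intervalIntegral Set MeasureTheory

-- key lemma
lemma keylem (g g' : ℝ → ℝ) (hg : ContinuousOn g (Icc 0 1))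
    (hder : ∀ x ∈ Icc (0:ℝ) 1, HasDerivWithinAt g (g' x) (Icc 0 1) x)
    (hg'c : ContinuousOn g' (Icc 0 1))
    (hzero : ∫ t in (0:ℝ)..1, g t = 0) :
    ∀ x ∈ Icc (0:ℝ) 1, |g x| ≤ ∫ t in (0:ℝ)..1, |g' t| := by
  have huIcc : uIcc (0:ℝ) 1 = Icc 0 1 := uIcc_of_le (by norm_num)
  have hgi : IntervalIntegrable g volume 0 1 := (huIcc ▸ hg).intervalIntegrable
  have hg'i : IntervalIntegrable g' volume 0 1 := (huIcc ▸ hg'c).intervalIntegrable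
  have hg'absi : IntervalIntegrable (fun t => |g' t|) volume 0 1 := hg'i.abs
  -- find c with g c = 0
  have hF : ∃ c ∈ Ioo (0:ℝ) 1, g c = 0 := by
    obtain ⟨c, hc, hc0⟩ := exists_hasDerivAt_eq_zero (f := fun u => ∫ t in (0:ℝ)..u, g t)
      (f' := g) (by norm_num : (0:ℝ) < 1)
      (by
        have := intervalIntegral.continuousOn_primitive_interval
          (a := (0:ℝ)) (b := 1) (f := g) (μ := volume) ?_
        · rwa [uIcc_of_le (by norm_num)] at this
        · rw [uIcc_of_le (by norm_num)]
          exact hg.integrableOn_Icc)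
      (by simp [hzero])
      (fun x hx => by
        have hxI : Icc (0:ℝ) 1 ∈ nhds x := Icc_mem_nhds hx.1 hx.2
        have hca : ContinuousAt g x := (hg x (Ioo_subset_Icc_self hx)).continuousAt hxI
        exact intervalIntegral.integral_hasDerivAt_right
          (hgi.mono_set (by rw [uIcc_of_le (le_of_lt hx.1), uIcc_of_le (by norm_num : (0:ℝ) ≤ 1)]; exact Icc_subset_Icc le_rfl hx.2.le))
          ⟨Ioo 0 1, isOpen_Ioo.mem_nhds hx, (hg.mono Ioo_subset_Icc_self).aestronglyMeasurable measurableSet_Ioo⟩ hca)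
    exact ⟨c, hc, hc0⟩
  obtain ⟨c, hc, hgc⟩ := hF
  intro x hx
  have hsub : ∀ a b : ℝ, a ∈ Icc (0:ℝ) 1 → b ∈ Icc (0:ℝ) 1 → a ≤ b →
      ∫ t in a..b, g' t = g b - g a := by
    intro a b ha hb hab
    apply intervalIntegral.integral_eq_sub_of_hasDeriv_right_of_le hab
      (hg.mono (Icc_subset_Icc ha.1 hb.2))
      (fun y hy => by
        have hyI : Icc (0:ℝ) 1 ∈ nhds y :=
          Icc_mem_nhds (lt_of_le_of_lt ha.1 hy.1) (lt_of_lt_of_le hy.2 hb.2)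
        exact ((hder y ⟨(ha.1.trans hy.1.le), (hy.2.le.trans hb.2)⟩).hasDerivAt hyI).hasDerivWithinAt)
      (hg'i.mono_set (by rw [uIcc_of_le hab, uIcc_of_le (by norm_num : (0:ℝ) ≤ 1)]; exact Icc_subset_Icc ha.1 hb.2))
  have key : ∀ a b : ℝ, a ∈ Icc (0:ℝ) 1 → b ∈ Icc (0:ℝ) 1 → a ≤ b →
      |g b - g a| ≤ ∫ t in (0:ℝ)..1, |g' t| := by
    intro a b ha hb hab
    rw [← hsub a b ha hb hab]
    calc |∫ t in a..b, g' t| ≤ ∫ t in a..b, |g' t| :=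
          intervalIntegral.abs_integral_le_integral_abs hab
      _ ≤ ∫ t in (0:ℝ)..1, |g' t| := by
          apply intervalIntegral.integral_mono_interval ha.1 hab hb.2
          · filter_upwards with t using abs_nonneg _
          · exact hg'absi
  rcases le_total c x with h | h
  · have := key c x (Ioo_subset_Icc_self hc) hx h
    rwa [hgc, sub_zero] at this
  · have := key x c hx (Ioo_subset_Icc_self hc) h
    rw [hgc, zero_sub, abs_neg] at this
    exact this

lemma cslem (h : ℝ → ℝ) (hc : ContinuousOn h (Icc 0 1)) :
    ∫ t in (0:ℝ)..1, |h t| ≤ Real.sqrt (∫ t in (0:ℝ)..1, (h t)^2) := by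
  have huIcc : uIcc (0:ℝ) 1 = Icc 0 1 := uIcc_of_le (by norm_num)
  have hi : IntervalIntegrable (fun t => |h t|) volume 0 1 :=
    ((huIcc ▸ hc).intervalIntegrable).abs
  have hsq : IntervalIntegrable (fun t => (h t)^2) volume 0 1 :=
    ((huIcc ▸ hc).pow 2).intervalIntegrable
  set a := ∫ t in (0:ℝ)..1, |h t| with ha_def
  have ha : 0 ≤ a :=
    intervalIntegral.integral_nonneg (by norm_num) (fun t _ => abs_nonneg _)
  have expand : ∫ t in (0:ℝ)..1, (|h t| - a)^2
      = (∫ t in (0:ℝ)..1, (h t)^2) - a^2 := by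
    have hpt : ∀ t, (|h t| - a)^2 = (h t)^2 - (2*a)*|h t| + a^2 := by
      intro t; rw [sub_sq, sq_abs]; ring
    simp_rw [hpt]
    rw [intervalIntegral.integral_add ((hsq.sub (hi.const_mul (2*a)))) intervalIntegrable_const,
      intervalIntegral.integral_sub hsq (hi.const_mul (2*a)),
      intervalIntegral.integral_const_mul, intervalIntegral.integral_const, ← ha_def]
    simp
    ring
  have hnn : 0 ≤ ∫ t in (0:ℝ)..1, (|h t| - a)^2 :=
    intervalIntegral.integral_nonneg (by norm_num) (fun t _ => sq_nonneg _)
  have h2 : a^2 ≤ ∫ t in (0:ℝ)..1, (h t)^2 := by linarith [expand ▸ hnn]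
  calc a = Real.sqrt (a^2) := by rw [Real.sqrt_sq ha]
    _ ≤ Real.sqrt (∫ t in (0:ℝ)..1, (h t)^2) := Real.sqrt_le_sqrt h2

/-- Sobolev-embedding bound: if `f` is `m` times continuously differentiable on
`[0,1]` and `∫₀¹ f^{(ν)} = 0` for `ν = 0, 1, …, m-1`, then
`sup_{x ∈ [0,1]} |f(x)| ≤ (∫₀¹ (f^{(m)})²)^{1/2}`. -/
theorem stmt7 (m : ℕ) (hm : 1 ≤ m) (f : ℝ → ℝ)
    (hf : ContDiffOn ℝ m f (Set.Icc (0 : ℝ) 1))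
    (hint : ∀ ν : ℕ, ν < m →
      ∫ t in (0 : ℝ)..1, iteratedDerivWithin ν f (Set.Icc (0 : ℝ) 1) t = 0) :
    ∀ x ∈ Set.Icc (0 : ℝ) 1,
      |f x| ≤ Real.sqrt
        (∫ t in (0 : ℝ)..1, (iteratedDerivWithin m f (Set.Icc (0 : ℝ) 1) t) ^ 2) := by
  have hu : UniqueDiffOn ℝ (Icc (0:ℝ) 1) := uniqueDiffOn_Icc one_pos
  have cont : ∀ k, k ≤ m → ContinuousOn (iteratedDerivWithin k f (Icc 0 1)) (Icc 0 1) :=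
    fun k hk => hf.continuousOn_iteratedDerivWithin (by exact_mod_cast hk) hu
  have der : ∀ k, k < m → ∀ x ∈ Icc (0:ℝ) 1,
      HasDerivWithinAt (iteratedDerivWithin k f (Icc 0 1))
        (iteratedDerivWithin (k+1) f (Icc 0 1) x) (Icc 0 1) x := by
    intro k hk x hx
    have hd : DifferentiableWithinAt ℝ (iteratedDerivWithin k f (Icc 0 1)) (Icc 0 1) x :=
      hf.differentiableOn_iteratedDerivWithin (by exact_mod_cast hk) hu x hx
    have := hd.hasDerivWithinAt
    rwa [← iteratedDerivWithin_succ] at this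
  have chain : ∀ k, 1 ≤ k → k ≤ m → ∀ x ∈ Icc (0:ℝ) 1,
      |f x| ≤ ∫ t in (0:ℝ)..1, |iteratedDerivWithin k f (Icc 0 1) t| := by
    intro k
    induction k with
    | zero => intro h; exact absurd h (by norm_num)
    | succ k ih =>
      intro _ hkm x hx
      have hklt : k < m := hkm
      have B : ∀ t ∈ Icc (0:ℝ) 1, |iteratedDerivWithin k f (Icc 0 1) t|
          ≤ ∫ s in (0:ℝ)..1, |iteratedDerivWithin (k+1) f (Icc 0 1) s| :=
        keylem _ _ (cont k hklt.le) (der k hklt) (cont (k+1) hkm) (hint k hklt)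
      rcases Nat.eq_zero_or_pos k with hk0 | hk1
      · subst hk0
        have := B x hx
        rwa [iteratedDerivWithin_zero] at this
      · calc |f x| ≤ ∫ t in (0:ℝ)..1, |iteratedDerivWithin k f (Icc 0 1) t| :=
              ih hk1 hklt.le x hx
          _ ≤ ∫ t in (0:ℝ)..1, (fun _ : ℝ => ∫ s in (0:ℝ)..1,
                |iteratedDerivWithin (k+1) f (Icc 0 1) s|) t := by
              have hII : IntervalIntegrable
                  (fun t => |iteratedDerivWithin k f (Icc 0 1) t|) MeasureTheory.volume 0 1 := by
                have h1 : uIcc (0:ℝ) 1 = Icc 0 1 := uIcc_of_le (by norm_num)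
                exact (ContinuousOn.intervalIntegrable (by rw [h1]; exact cont k hklt.le)).abs
              exact intervalIntegral.integral_mono_on (by norm_num) hII
                intervalIntegrable_const (fun t ht => B t ht)
          _ = ∫ s in (0:ℝ)..1, |iteratedDerivWithin (k+1) f (Icc 0 1) s| := by simp
  intro x hx
  calc |f x| ≤ ∫ t in (0:ℝ)..1, |iteratedDerivWithin m f (Icc 0 1) t| :=
        chain m hm le_rfl x hx
    _ ≤ Real.sqrt (∫ t in (0:ℝ)..1, (iteratedDerivWithin m f (Icc 0 1) t)^2) :=
        cslem _ (cont m le_rfl)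
end
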